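/- arXiv:1506.05716 — 2 statements merged into one kernel-verified Lean document; each statement's English description precedes it below -/
import Mathlib

section
/- Let K > 0 and let f(z) = z + ∑_{n≥2} b(n) z^n be holomorphic on the unit disc D = {|z| < 1} with |b(n)| ≤ K·n² for every n ≥ 2. Then for every r with 0 < r ≤ R₃(K), the image f({|z| < r}) is a convex subset of ℂ; here R₃(K) is the smallest root in (0,1) of the equation X⁵ − 5X⁴ + 11X³ + X² + 16X = (1−X)⁵/K. -/
/-!
Write `f = id + g` with `g z = ∑_{n ≥ 2} b n zⁿ`. On the disc of radius `r < 1` the bound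
`‖b n‖ ≤ K n²` makes `g` Lipschitz with constant `A = K ∑ n³ r^(n-1)` and bounds the convexity
defect `s g x + t g y - g (s x + t y)` by `B/2 · s t ‖x - y‖²` with `B = K ∑ n³ (n-1) r^(n-2)`.
By the quantitative inverse function theorem, `f` maps the closed disc of radius `ε` about
`c = s x + t y` onto the disc of radius `(1 - A) ε` about `f c`; strong convexity of `‖·‖²` puts
`c` at depth at least `s t ‖x - y‖² / (2r)` inside the disc of radius `r`. Hence `s f x + t f y`
is a value of `f` on that disc as soon as `A + B r ≤ 1`. Finally
`A + B r = K ∑_{n ≥ 2} n⁴ r^(n-1) = K (r⁵ - 5r⁴ + 11r³ + r² + 16r) / (1 - r)⁵`, and the quintic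
is increasing on `[0, 1]`, so the condition holds up to its root `R₃`.
-/

open Complex Filter Topology

noncomputable section

/-- `x` satisfies the quintic equation `X⁵ − 5X⁴ + 11X³ + X² + 16X = (1−X)⁵/K`. -/
def QuinticEq (K x : ℝ) : Prop :=
  x ^ 5 - 5 * x ^ 4 + 11 * x ^ 3 + x ^ 2 + 16 * x = (1 - x) ^ 5 / K

open Metric NNReal

def quintic (x : ℝ) : ℝ := x ^ 5 - 5 * x ^ 4 + 11 * x ^ 3 + x ^ 2 + 16 * x

theorem quintic_monotoneOn : MonotoneOn quintic (Set.Icc 0 1) := by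
  rintro x ⟨hx0, hx1⟩ y ⟨hy0, hy1⟩ hxy
  unfold quintic
  nlinarith [mul_nonneg (mul_nonneg hx0 hy0) (sub_nonneg.2 hxy), mul_nonneg hx0 (sub_nonneg.2 hxy),
    mul_nonneg hy0 (sub_nonneg.2 hxy), mul_nonneg (mul_nonneg hy0 hy0) (sub_nonneg.2 hxy),
    mul_nonneg (mul_nonneg hx0 hx0) (sub_nonneg.2 hxy), sub_nonneg.2 hx1, sub_nonneg.2 hy1]

theorem mul_quintic_le_of_le_root {K R r : ℝ} (hK : 0 < K) (hR : R < 1) (hRK : QuinticEq K R)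
    (hr : 0 ≤ r) (hrR : r ≤ R) : K * quintic r ≤ (1 - r) ^ 5 := by
  rw [← le_div_iff₀' hK]
  calc quintic r ≤ quintic R :=
        quintic_monotoneOn ⟨hr, hrR.trans hR.le⟩ ⟨hr.trans hrR, hR.le⟩ hrR
    _ = (1 - R) ^ 5 / K := hRK
    _ ≤ (1 - r) ^ 5 / K := by gcongr

theorem succ_pow_four_eq_choose (n : ℕ) :
    ((n : ℝ) + 1) ^ 4 = 24 * (n + 4).choose 4 - 36 * (n + 3).choose 3 + 14 * (n + 2).choose 2
      - (n + 1).choose 1 := by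
  simp only [← Nat.choose_symm_add, Nat.cast_add_choose]
  push_cast [Nat.factorial_succ]
  field_simp
  ring

theorem hasSum_succ_pow_four_mul_geometric {r : ℝ} (hr : ‖r‖ < 1) :
    HasSum (fun n : ℕ => ((n : ℝ) + 1) ^ 4 * r ^ n)
      ((1 + 11 * r + 11 * r ^ 2 + r ^ 3) / (1 - r) ^ 5) := by
  have h k := hasSum_choose_mul_geometric_of_norm_lt_one (𝕜 := ℝ) k hr
  have hr1 : 1 - r ≠ 0 := by
    rw [Real.norm_eq_abs, abs_lt] at hr; linarith
  have hs := ((((h 4).mul_left 24).sub ((h 3).mul_left 36)).add ((h 2).mul_left 14)).sub (h 1)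
  have hsum : 24 * (1 / (1 - r) ^ (4 + 1)) - 36 * (1 / (1 - r) ^ (3 + 1))
      + 14 * (1 / (1 - r) ^ (2 + 1)) - 1 / (1 - r) ^ (1 + 1)
      = (1 + 11 * r + 11 * r ^ 2 + r ^ 3) / (1 - r) ^ 5 := by
    field_simp; ring
  rw [← hsum]
  exact hs.congr_fun fun n => by rw [succ_pow_four_eq_choose]; ring

theorem hasSum_add_two_pow_four_mul_geometric {r : ℝ} (hr : ‖r‖ < 1) :
    HasSum (fun n : ℕ => ((n : ℝ) + 2) ^ 4 * r ^ (n + 1)) (quintic r / (1 - r) ^ 5) := by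
  have hr1 : 1 - r ≠ 0 := by
    rw [Real.norm_eq_abs, abs_lt] at hr; linarith
  have h := (hasSum_nat_add_iff' 1).mpr (hasSum_succ_pow_four_mul_geometric hr)
  have hval : (1 + 11 * r + 11 * r ^ 2 + r ^ 3) / (1 - r) ^ 5
      - ∑ i ∈ Finset.range 1, ((i : ℝ) + 1) ^ 4 * r ^ i = quintic r / (1 - r) ^ 5 := by
    rw [Finset.sum_range_one, quintic]
    field_simp
    ring
  rw [← hval]
  exact h.congr_fun fun n => by push_cast; ring

/-- For `f z = z + ∑_{n ≥ 2} b n zⁿ` with `‖b n‖ ≤ K n²`, `K * derivMajorant r` and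
`K * deriv2Majorant r` bound `‖f' - 1‖` and `‖f''‖` on the disc of radius `r` (index shifted by 2). -/
def derivMajorant (r : ℝ) : ℝ := ∑' n : ℕ, ((n : ℝ) + 2) ^ 3 * r ^ (n + 1)

def deriv2Majorant (r : ℝ) : ℝ := ∑' n : ℕ, ((n : ℝ) + 2) ^ 3 * ((n : ℝ) + 1) * r ^ n

section Majorants

variable {r : ℝ}

theorem summable_derivMajorant (hr0 : 0 ≤ r) (hr1 : r < 1) :
    Summable fun n : ℕ => ((n : ℝ) + 2) ^ 3 * r ^ (n + 1) := by
  have hr : ‖r‖ < 1 := by rwa [Real.norm_of_nonneg hr0]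
  refine .of_nonneg_of_le (fun n => by positivity) (fun n => ?_)
    (hasSum_add_two_pow_four_mul_geometric hr).summable
  gcongr
  · linarith
  · norm_num

theorem summable_deriv2Majorant (hr0 : 0 < r) (hr1 : r < 1) :
    Summable fun n : ℕ => ((n : ℝ) + 2) ^ 3 * ((n : ℝ) + 1) * r ^ n := by
  have hr : ‖r‖ < 1 := by rwa [Real.norm_of_nonneg hr0.le]
  refine .of_nonneg_of_le (fun n => by positivity) (fun n => ?_)
    ((hasSum_add_two_pow_four_mul_geometric hr).summable.div_const r)
  rw [le_div_iff₀ hr0, pow_succ r n, ← mul_assoc]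
  gcongr
  nlinarith [pow_nonneg (by positivity : (0 : ℝ) ≤ n + 2) 3]

theorem derivMajorant_nonneg (hr : 0 ≤ r) : 0 ≤ derivMajorant r :=
  tsum_nonneg fun n => by positivity

theorem derivMajorant_add_mul_deriv2Majorant (hr0 : 0 < r) (hr1 : r < 1) :
    derivMajorant r + r * deriv2Majorant r = quintic r / (1 - r) ^ 5 := by
  have hr : ‖r‖ < 1 := by rwa [Real.norm_of_nonneg hr0.le]
  exact ((summable_derivMajorant hr0.le hr1).hasSum.add
    ((summable_deriv2Majorant hr0 hr1).hasSum.mul_left r)).unique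
    ((hasSum_add_two_pow_four_mul_geometric hr).congr_fun fun n => by ring)

end Majorants

section PowerBounds

variable {R : Type*} [NormedCommRing R] [NormOneClass R] {r : ℝ}

theorem norm_pow_succ_sub_pow_succ_le (hr : 0 ≤ r) (m : ℕ) {z w : R} (hz : ‖z‖ ≤ r)
    (hw : ‖w‖ ≤ r) : ‖z ^ (m + 1) - w ^ (m + 1)‖ ≤ (m + 1) * r ^ m * ‖z - w‖ := by
  induction m with
  | zero => simp
  | succ m ih =>
    have hzm : ‖z ^ (m + 1)‖ ≤ r ^ (m + 1) :=
      (norm_pow_le z _).trans (pow_le_pow_left₀ (norm_nonneg z) hz _)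
    calc ‖z ^ (m + 1 + 1) - w ^ (m + 1 + 1)‖
        = ‖z ^ (m + 1) * (z - w) + (z ^ (m + 1) - w ^ (m + 1)) * w‖ := by ring_nf
      _ ≤ r ^ (m + 1) * ‖z - w‖ + ((m + 1) * r ^ m * ‖z - w‖) * r := by
        refine (norm_add_le _ _).trans (add_le_add ?_ ?_) <;>
          exact (norm_mul_le _ _).trans (by gcongr)
      _ = ((m + 1 : ℕ) + 1) * r ^ (m + 1) * ‖z - w‖ := by push_cast; ring

theorem norm_pow_add_two_sub_taylor_le (hr : 0 ≤ r) (m : ℕ) {z c : R} (hz : ‖z‖ ≤ r)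
    (hc : ‖c‖ ≤ r) :
    ‖z ^ (m + 2) - c ^ (m + 2) - (m + 2) * c ^ (m + 1) * (z - c)‖
      ≤ (m + 2) * (m + 1) / 2 * r ^ m * ‖z - c‖ ^ 2 := by
  induction m with
  | zero =>
    calc _ = ‖(z - c) ^ 2‖ := by ring_nf
      _ ≤ _ := by simpa using norm_pow_le (z - c) 2
  | succ m ih =>
    have hcm : ‖c ^ (m + 1)‖ ≤ r ^ (m + 1) :=
      (norm_pow_le c _).trans (pow_le_pow_left₀ (norm_nonneg c) hc _)
    have hm : ‖((m : R) + 2)‖ ≤ m + 2 := by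
      simpa using Nat.norm_cast_le (α := R) (m + 2)
    calc _ = ‖z * (z ^ (m + 2) - c ^ (m + 2) - (m + 2) * c ^ (m + 1) * (z - c))
          + ((m : R) + 2) * c ^ (m + 1) * (z - c) ^ 2‖ := by push_cast; ring_nf
      _ ≤ r * ((m + 2) * (m + 1) / 2 * r ^ m * ‖z - c‖ ^ 2)
          + (m + 2) * r ^ (m + 1) * ‖z - c‖ ^ 2 := by
        refine (norm_add_le _ _).trans (add_le_add ((norm_mul_le _ _).trans ?_) ?_)
        · gcongr
        · refine (norm_mul_le _ _).trans ?_
          gcongr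
          · exact (norm_mul_le _ _).trans (by gcongr)
          · exact norm_pow_le _ _
      _ = ((m + 1 : ℕ) + 2) * ((m + 1 : ℕ) + 1) / 2 * r ^ (m + 1) * ‖z - c‖ ^ 2 := by
        push_cast; ring

variable [NormedAlgebra ℝ R]

theorem norm_smul_pow_add_smul_pow_sub_pow_le (hr : 0 ≤ r) (m : ℕ) {x y : R} (hx : ‖x‖ ≤ r)
    (hy : ‖y‖ ≤ r) {a b : ℝ} (ha : 0 ≤ a) (hb : 0 ≤ b) (hab : a + b = 1) :
    ‖a • x ^ (m + 2) + b • y ^ (m + 2) - (a • x + b • y) ^ (m + 2)‖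
      ≤ (m + 2) * (m + 1) / 2 * r ^ m * (a * b * ‖x - y‖ ^ 2) := by
  set c := a • x + b • y with hc_def
  have hc : ‖c‖ ≤ r := by
    calc ‖c‖ ≤ a * ‖x‖ + b * ‖y‖ := by
          refine (norm_add_le _ _).trans ?_
          rw [norm_smul, norm_smul, Real.norm_of_nonneg ha, Real.norm_of_nonneg hb]
      _ ≤ a * r + b * r := by gcongr
      _ = r := by rw [← add_mul, hab, one_mul]
  have hab' : algebraMap ℝ R a + algebraMap ℝ R b = 1 := by rw [← map_add, hab, map_one]
  have hxc : x - c = b • (x - y) := by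
    simp only [c, Algebra.smul_def]; linear_combination (-x) * hab'
  have hyc : y - c = -(a • (x - y)) := by
    simp only [c, Algebra.smul_def]; linear_combination (-y) * hab'
  clear_value c
  set T := fun u : R => u ^ (m + 2) - c ^ (m + 2) - (m + 2) * c ^ (m + 1) * (u - c)
  -- the first-order terms cancel because `c` is the barycentre of `x` and `y`
  have hT : a • x ^ (m + 2) + b • y ^ (m + 2) - c ^ (m + 2) = a • T x + b • T y := by
    simp only [T, Algebra.smul_def] at hc_def ⊢
    linear_combination (c ^ (m + 2) - (m + 2) * c ^ (m + 1) * c) * hab'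
      - (m + 2) * c ^ (m + 1) * hc_def
  set C : ℝ := (m + 2) * (m + 1) / 2 * r ^ m
  calc _ = ‖a • T x + b • T y‖ := by rw [hT]
    _ ≤ a * (C * ‖b • (x - y)‖ ^ 2) + b * (C * ‖a • (x - y)‖ ^ 2) := by
      refine (norm_add_le _ _).trans (add_le_add ?_ ?_)
      · rw [norm_smul, Real.norm_of_nonneg ha, ← hxc]
        exact mul_le_mul_of_nonneg_left (norm_pow_add_two_sub_taylor_le hr m hx hc) ha
      · rw [norm_smul, Real.norm_of_nonneg hb, ← norm_neg (a • (x - y)), ← hyc]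
        exact mul_le_mul_of_nonneg_left (norm_pow_add_two_sub_taylor_le hr m hy hc) hb
    _ = C * (a * b * ‖x - y‖ ^ 2) := by
      rw [norm_smul, norm_smul, Real.norm_of_nonneg ha, Real.norm_of_nonneg hb]
      linear_combination (C * a * b * ‖x - y‖ ^ 2) * hab

end PowerBounds

theorem norm_smul_add_smul_sq {E : Type*} [NormedAddCommGroup E] [InnerProductSpace ℝ E]
    {a b : ℝ} (hab : a + b = 1) (x y : E) :
    ‖a • x + b • y‖ ^ 2 = a * ‖x‖ ^ 2 + b * ‖y‖ ^ 2 - a * b * ‖x - y‖ ^ 2 := by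
  rw [norm_add_sq_real, norm_sub_sq_real, norm_smul, norm_smul, real_inner_smul_left,
    real_inner_smul_right, mul_pow, mul_pow, Real.norm_eq_abs, Real.norm_eq_abs, sq_abs, sq_abs]
  obtain rfl := eq_sub_of_add_eq hab
  ring

section Convexity

variable {E : Type*} [NormedAddCommGroup E] [InnerProductSpace ℝ E]

theorem closedBall_subset_ball_of_convex_combination {r a b : ℝ} {x y : E} (hr : 0 < r)
    (hx : x ∈ ball (0 : E) r) (hy : y ∈ ball (0 : E) r) (ha : 0 ≤ a) (hb : 0 ≤ b)
    (hab : a + b = 1) :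
    closedBall (a • x + b • y) (a * b * ‖x - y‖ ^ 2 / (2 * r)) ⊆ ball 0 r := by
  rw [mem_ball_zero_iff] at hx hy
  set c := a • x + b • y
  set δ := a * b * ‖x - y‖ ^ 2
  have hc : ‖c‖ ^ 2 < r ^ 2 - δ := by
    have h1 : ‖x‖ ^ 2 < r ^ 2 := pow_lt_pow_left₀ hx (norm_nonneg x) two_ne_zero
    have h2 : ‖y‖ ^ 2 < r ^ 2 := pow_lt_pow_left₀ hy (norm_nonneg y) two_ne_zero
    rw [norm_smul_add_smul_sq hab]
    rcases ha.eq_or_lt with rfl | ha'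
    · nlinarith
    · nlinarith
  have hgap : ‖c‖ + δ / (2 * r) < r := by
    have : δ < (r - ‖c‖) * (2 * r) := by nlinarith [sq_nonneg (r - ‖c‖)]
    linarith [(div_lt_iff₀ (by positivity : 0 < 2 * r)).2 this]
  intro z hz
  rw [mem_closedBall] at hz
  rw [mem_ball_zero_iff]
  calc ‖z‖ ≤ ‖c‖ + dist z c := by rw [dist_eq_norm]; exact norm_le_norm_add_norm_sub' z c
    _ < r := by linarith
  
variable [CompleteSpace E]

theorem convex_image_ball_of_approximatesLinearOn {f : E → E} {r B : ℝ} {A : ℝ≥0}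
    (hr : 0 < r)
    (hA : ApproximatesLinearOn f (ContinuousLinearMap.id ℝ E) (ball 0 r) A)
    (hB : ∀ x ∈ ball (0 : E) r, ∀ y ∈ ball (0 : E) r, ∀ a b : ℝ, 0 ≤ a → 0 ≤ b → a + b = 1 →
      ‖a • f x + b • f y - f (a • x + b • y)‖ ≤ B / 2 * (a * b * ‖x - y‖ ^ 2))
    (hAB : A + B * r ≤ 1) :
    Convex ℝ (f '' ball 0 r) := by
  rintro _ ⟨x, hx, rfl⟩ _ ⟨y, hy, rfl⟩ a b ha hb hab
  have hball := closedBall_subset_ball_of_convex_combination hr hx hy ha hb hab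
  let idInv : (ContinuousLinearMap.id ℝ E).NonlinearRightInverse :=
    ⟨id, 1, fun _ => by simp, fun _ => rfl⟩
  have hsurj := hA.surjOn_closedBall_of_nonlinearRightInverse idInv (by positivity) hball
  refine (hsurj.mono hball Set.Subset.rfl) ?_
  rw [mem_closedBall, dist_eq_norm]
  calc ‖a • f x + b • f y - f (a • x + b • y)‖ ≤ B / 2 * (a * b * ‖x - y‖ ^ 2) :=
        hB x hx y hy a b ha hb hab
    _ = B * r * (a * b * ‖x - y‖ ^ 2 / (2 * r)) := by field_simp
    _ ≤ ((idInv.nnnorm : ℝ)⁻¹ - A) * (a * b * ‖x - y‖ ^ 2 / (2 * r)) := by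
        gcongr
        simp [idInv]
        linarith

end Convexity

section PowerSeries

theorem hasSum_sub_self_of_hasSum {R : Type*} [Ring R] [TopologicalSpace R]
    [IsTopologicalAddGroup R] {b : ℕ → R} {z w : R} (hb0 : b 0 = 0) (hb1 : b 1 = 1)
    (h : HasSum (fun n : ℕ => b n * z ^ n) w) :
    HasSum (fun n : ℕ => b (n + 2) * z ^ (n + 2)) (w - z) := by
  simpa [Finset.sum_range_succ, hb0, hb1] using (hasSum_nat_add_iff' 2).mpr h

variable {R : Type*} [NormedCommRing R] [NormOneClass R] [NormedAlgebra ℝ R]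
  {f : R → R} {b : ℕ → R} {K r : ℝ}

theorem approximatesLinearOn_id_of_norm_coeff_le (hr0 : 0 < r) (hr1 : r < 1)
    (hb : ∀ n : ℕ, ‖b (n + 2)‖ ≤ K * ((n : ℝ) + 2) ^ 2)
    (hf : ∀ z ∈ ball (0 : R) r, HasSum (fun n : ℕ => b (n + 2) * z ^ (n + 2)) (f z - z)) :
    ApproximatesLinearOn f (ContinuousLinearMap.id ℝ R) (ball 0 r)
      (K * derivMajorant r).toNNReal := by
  intro x hx y hy
  have hxr : ‖x‖ ≤ r := (mem_ball_zero_iff.1 hx).le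
  have hyr : ‖y‖ ≤ r := (mem_ball_zero_iff.1 hy).le
  have hsum : HasSum (fun n : ℕ => b (n + 2) * (x ^ (n + 2) - y ^ (n + 2)))
      (f x - f y - (x - y)) := by
    have h := (hf x hx).sub (hf y hy)
    rw [sub_sub_sub_comm] at h
    exact h.congr_fun fun n => by ring
  have hbound : HasSum (fun n : ℕ => K * ‖x - y‖ * (((n : ℝ) + 2) ^ 3 * r ^ (n + 1)))
      (K * ‖x - y‖ * derivMajorant r) :=
    (summable_derivMajorant hr0.le hr1).hasSum.mul_left _
  calc ‖f x - f y - (x - y)‖ ≤ K * ‖x - y‖ * derivMajorant r :=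
      hsum.norm_le_of_bounded hbound fun n => by
        refine (norm_mul_le _ _).trans ?_
        calc _ ≤ K * ((n : ℝ) + 2) ^ 2
              * ((((n + 1 : ℕ) : ℝ) + 1) * r ^ (n + 1) * ‖x - y‖) :=
              mul_le_mul (hb n) (norm_pow_succ_sub_pow_succ_le hr0.le (n + 1) hxr hyr)
                (norm_nonneg _) ((norm_nonneg _).trans (hb n))
          _ = _ := by push_cast; ring
    _ = K * derivMajorant r * ‖x - y‖ := by ring
    _ ≤ _ := by gcongr; exact Real.le_coe_toNNReal _

theorem norm_smul_add_smul_sub_le_of_norm_coeff_le (hr0 : 0 < r) (hr1 : r < 1)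
    (hb : ∀ n : ℕ, ‖b (n + 2)‖ ≤ K * ((n : ℝ) + 2) ^ 2)
    (hf : ∀ z ∈ ball (0 : R) r, HasSum (fun n : ℕ => b (n + 2) * z ^ (n + 2)) (f z - z)) :
    ∀ x ∈ ball (0 : R) r, ∀ y ∈ ball (0 : R) r, ∀ s t : ℝ, 0 ≤ s → 0 ≤ t → s + t = 1 →
      ‖s • f x + t • f y - f (s • x + t • y)‖
        ≤ K * deriv2Majorant r / 2 * (s * t * ‖x - y‖ ^ 2) := by
  intro x hx y hy s t hs ht hst
  have hc := convex_ball (0 : R) r hx hy hs ht hst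
  have hxr : ‖x‖ ≤ r := (mem_ball_zero_iff.1 hx).le
  have hyr : ‖y‖ ≤ r := (mem_ball_zero_iff.1 hy).le
  have hsum : HasSum (fun n : ℕ => b (n + 2) *
        (s • x ^ (n + 2) + t • y ^ (n + 2) - (s • x + t • y) ^ (n + 2)))
      (s • f x + t • f y - f (s • x + t • y)) := by
    have h := (((hf x hx).const_smul s).add ((hf y hy).const_smul t)).sub (hf _ hc)
    rw [show s • (f x - x) + t • (f y - y) - (f (s • x + t • y) - (s • x + t • y))
      = s • f x + t • f y - f (s • x + t • y) by simp only [smul_sub]; abel] at h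
    exact h.congr_fun fun n => by simp only [mul_sub, mul_add, mul_smul_comm]
  have hbound : HasSum (fun n : ℕ =>
        K / 2 * (s * t * ‖x - y‖ ^ 2) * (((n : ℝ) + 2) ^ 3 * ((n : ℝ) + 1) * r ^ n))
      (K / 2 * (s * t * ‖x - y‖ ^ 2) * deriv2Majorant r) :=
    (summable_deriv2Majorant hr0 hr1).hasSum.mul_left _
  calc _ ≤ K / 2 * (s * t * ‖x - y‖ ^ 2) * deriv2Majorant r :=
        hsum.norm_le_of_bounded hbound fun n => by
          refine (norm_mul_le _ _).trans ?_
          calc _ ≤ K * ((n : ℝ) + 2) ^ 2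
                * ((n + 2) * (n + 1) / 2 * r ^ n * (s * t * ‖x - y‖ ^ 2)) :=
                mul_le_mul (hb n)
                  (norm_smul_pow_add_smul_pow_sub_pow_le hr0.le n hxr hyr hs ht hst)
                  (norm_nonneg _) ((norm_nonneg _).trans (hb n))
            _ = _ := by ring
    _ = _ := by ring

end PowerSeries

theorem stmt8_general (K : ℝ) (hK : 0 < K) (f : ℂ → ℂ) (b : ℕ → ℂ)
    (hb0 : b 0 = 0) (hb1 : b 1 = 1)
    (hb : ∀ n : ℕ, 2 ≤ n → ‖b n‖ ≤ K * (n : ℝ) ^ 2)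
    (hf : ∀ z ∈ Metric.ball (0 : ℂ) 1, HasSum (fun n : ℕ => b n * z ^ n) (f z))
    (R₃ : ℝ) (hR₃mem : R₃ ∈ Set.Ioo (0 : ℝ) 1) (hR₃eq : QuinticEq K R₃) :
    ∀ r : ℝ, 0 < r → r ≤ R₃ → Convex ℝ (f '' Metric.ball (0 : ℂ) r) := by
  intro r hr0 hrR
  have hr1 : r < 1 := hrR.trans_lt hR₃mem.2
  have hcoeff : ∀ n : ℕ, ‖b (n + 2)‖ ≤ K * ((n : ℝ) + 2) ^ 2 := fun n => by
    simpa using hb (n + 2) (by omega)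
  have htail : ∀ z ∈ ball (0 : ℂ) r, HasSum (fun n : ℕ => b (n + 2) * z ^ (n + 2)) (f z - z) :=
    fun z hz => hasSum_sub_self_of_hasSum hb0 hb1 (hf z (ball_subset_ball hr1.le hz))
  refine convex_image_ball_of_approximatesLinearOn hr0
    (approximatesLinearOn_id_of_norm_coeff_le hr0 hr1 hcoeff htail)
    (norm_smul_add_smul_sub_le_of_norm_coeff_le hr0 hr1 hcoeff htail) ?_
  rw [Real.coe_toNNReal _ (mul_nonneg hK.le (derivMajorant_nonneg hr0.le))]
  calc K * derivMajorant r + K * deriv2Majorant r * r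
      = K * quintic r / (1 - r) ^ 5 := by
        rw [mul_div_assoc, ← derivMajorant_add_mul_deriv2Majorant hr0 hr1]; ring
    _ ≤ 1 := by
        rw [div_le_one (by have := sub_pos.2 hr1; positivity)]
        exact mul_quintic_le_of_le_root hK hR₃mem.2 hR₃eq hr0.le hrR

/-- **Proposition (radius of convexity).** If `f(z) = z + ∑_{n ≥ 2} b(n) zⁿ` is holomorphic
on the unit disc with `|b(n)| ≤ K n²` for `n ≥ 2`, and `R₃` is the smallest root in `(0,1)`
of `X⁵ − 5X⁴ + 11X³ + X² + 16X = (1−X)⁵/K`, then `f({|z| < r})` is convex for every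
`0 < r ≤ R₃`. -/
theorem stmt8 (K : ℝ) (hK : 0 < K) (f : ℂ → ℂ) (b : ℕ → ℂ)
    (hb0 : b 0 = 0) (hb1 : b 1 = 1)
    (hb : ∀ n : ℕ, 2 ≤ n → ‖b n‖ ≤ K * (n : ℝ) ^ 2)
    (hf : ∀ z ∈ Metric.ball (0 : ℂ) 1, HasSum (fun n : ℕ => b n * z ^ n) (f z))
    (R₃ : ℝ) (hR₃mem : R₃ ∈ Set.Ioo (0 : ℝ) 1) (hR₃eq : QuinticEq K R₃)
    (hR₃min : ∀ x ∈ Set.Ioo (0 : ℝ) 1, QuinticEq K x → R₃ ≤ x) :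
    ∀ r : ℝ, 0 < r → r ≤ R₃ → Convex ℝ (f '' Metric.ball (0 : ℂ) r) :=
  stmt8_general K hK f b hb0 hb1 hb hf R₃ hR₃mem hR₃eq
end
end

section
/- For K > 0, let R₃(K) be the smallest root in (0,1) of X⁵ − 5X⁴ + 11X³ + X² + 16X = (1−X)⁵/K, and let R₂(K) be the smallest root in (0,1) of X³ − 3X² + 4X = (1−X)³/K. Then R₃ is a strictly decreasing function of K on (0,∞), with lim_{K→0⁺} R₃(K) = 1 and lim_{K→+∞} R₃(K) = 0, and R₃(K) ≤ R₂(K) for every K > 0. -/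
open Complex Filter Topology

noncomputable section

/-- `x` satisfies the cubic equation `X³ − 3X² + 4X = (1−X)³/K`. -/
def CubicEq (K x : ℝ) : Prop :=
  x ^ 3 - 3 * x ^ 2 + 4 * x = (1 - x) ^ 3 / K

/-!
A point `x ∈ (0,1)` solves the quintic for exactly one `K`, namely `K = (1-x)⁵ / P(x)` with
`P(X) = X⁵ − 5X⁴ + 11X³ + X² + 16X`. This map `x ↦ K` is strictly decreasing and positive on
`(0,1)`, so `R₃` is a right inverse of it, and monotonicity and both limits follow by order
arguments alone. For the comparison, `P(X) = (1-X)² Q(X) + 12X(X+1)` with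
`Q(X) = X³ − 3X² + 4X`, so at every `x ∈ (0,1)` the quintic's `K` is smaller than the cubic's;
evaluated at `x = R₂(K)` this places `R₂(K)` to the right of `R₃(K)`.
-/

open Set

def quinticLhs (x : ℝ) : ℝ := x ^ 5 - 5 * x ^ 4 + 11 * x ^ 3 + x ^ 2 + 16 * x

def cubicLhs (x : ℝ) : ℝ := x ^ 3 - 3 * x ^ 2 + 4 * x

def quinticParam (x : ℝ) : ℝ := (1 - x) ^ 5 / quinticLhs x

def cubicParam (x : ℝ) : ℝ := (1 - x) ^ 3 / cubicLhs x

lemma quinticLhs_pos {x : ℝ} (hx : 0 < x) : 0 < quinticLhs x := by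
  have : 0 < x ^ 2 * ((x - 5 / 2) ^ 2 + 19 / 4) + x + 16 := by positivity
  calc 0 < x * (x ^ 2 * ((x - 5 / 2) ^ 2 + 19 / 4) + x + 16) := mul_pos hx this
    _ = quinticLhs x := by unfold quinticLhs; ring

lemma cubicLhs_pos {x : ℝ} (hx : 0 < x) : 0 < cubicLhs x := by
  calc 0 < x * ((x - 3 / 2) ^ 2 + 7 / 4) := by positivity
    _ = cubicLhs x := by unfold cubicLhs; ring

lemma strictMono_quinticLhs : StrictMono quinticLhs := by
  refine strictMono_of_deriv_pos fun x => ?_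
  have h : HasDerivAt quinticLhs (5 * x ^ 4 - 20 * x ^ 3 + 33 * x ^ 2 + 2 * x + 16) x :=
    (((((hasDerivAt_pow 5 x).sub ((hasDerivAt_pow 4 x).const_mul 5)).add
      ((hasDerivAt_pow 3 x).const_mul 11)).add (hasDerivAt_pow 2 x)).add
      ((hasDerivAt_id' x).const_mul 16)).congr_deriv (by norm_num; ring)
  rw [h.deriv]
  nlinarith [sq_nonneg (x * (x - 2)), sq_nonneg (x + 1 / 13)]

lemma quinticLhs_eq_sq_mul_cubicLhs_add (x : ℝ) : quinticLhs x = (1 - x) ^ 2 * cubicLhs x + 12 * x * (x + 1) := by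
  unfold quinticLhs cubicLhs; ring

lemma quinticEq_iff {K x : ℝ} (hK : K ≠ 0) (hx : 0 < x) : QuinticEq K x ↔ quinticParam x = K := by
  rw [QuinticEq, quinticParam, ← quinticLhs, eq_div_iff hK, div_eq_iff (quinticLhs_pos hx).ne',
    mul_comm, eq_comm]

lemma cubicEq_iff {K x : ℝ} (hK : K ≠ 0) (hx : 0 < x) : CubicEq K x ↔ cubicParam x = K := by
  rw [CubicEq, cubicParam, ← cubicLhs, eq_div_iff hK, div_eq_iff (cubicLhs_pos hx).ne',
    mul_comm, eq_comm]

lemma quinticParam_pos : MapsTo quinticParam (Ioo 0 1) (Ioi 0) := fun _ hx =>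
  div_pos (pow_pos (sub_pos.2 hx.2) 5) (quinticLhs_pos hx.1)

lemma strictAntiOn_quinticParam : StrictAntiOn quinticParam (Ioo 0 1) := by
  intro x hx y hy hxy
  exact div_lt_div₀ (pow_lt_pow_left₀ (by linarith) (sub_pos.2 hy.2).le (by norm_num))
    (strictMono_quinticLhs hxy).le (pow_pos (sub_pos.2 hx.2) 5).le
    (quinticLhs_pos hx.1)

lemma quinticParam_lt_cubicParam {x : ℝ} (hx : x ∈ Ioo 0 1) : quinticParam x < cubicParam x := by
  have h1x : 0 < 1 - x := sub_pos.2 hx.2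
  calc quinticParam x < (1 - x) ^ 5 / ((1 - x) ^ 2 * cubicLhs x) := by
        rw [quinticParam, quinticLhs_eq_sq_mul_cubicLhs_add]
        gcongr
        · exact mul_pos (pow_pos h1x 2) (cubicLhs_pos hx.1)
        · exact lt_add_of_pos_right _ (by have := hx.1; positivity)
    _ = cubicParam x := by
        rw [cubicParam]
        field_simp [h1x.ne']

lemma StrictAntiOn.strictAntiOn_of_rightInvOn {α β : Type*} [LinearOrder α] [Preorder β]
    {f : α → β} {g : β → α} {s : Set α} {t : Set β} (hf : StrictAntiOn f s) (hg : MapsTo g t s)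
    (hfg : RightInvOn g f t) : StrictAntiOn g t := by
  intro a ha b hb hab
  rw [← hf.lt_iff_gt (hg ha) (hg hb), hfg ha, hfg hb]
  exact hab

section RightInverse

variable {f g : ℝ → ℝ}

lemma StrictAntiOn.tendsto_nhdsGT_zero_of_rightInvOn (hf : StrictAntiOn f (Ioo 0 1))
    (hpos : MapsTo f (Ioo 0 1) (Ioi 0)) (hg : MapsTo g (Ioi 0) (Ioo 0 1))
    (hfg : RightInvOn g f (Ioi 0)) : Tendsto g (𝓝[>] 0) (𝓝 1) := by
  refine tendsto_order.2 ⟨fun a ha => ?_, fun a ha => ?_⟩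
  · obtain ⟨x, hax, hx1⟩ := exists_between (max_lt ha one_pos)
    have hx : x ∈ Ioo (0 : ℝ) 1 := ⟨(le_max_right a 0).trans_lt hax, hx1⟩
    filter_upwards [Ioo_mem_nhdsGT (hpos hx)] with K hK
    have : x < g K := by
      rw [← hf.lt_iff_gt (hg hK.1) hx, hfg hK.1]
      exact hK.2
    exact (le_max_left a 0).trans_lt (hax.trans this)
  · filter_upwards [self_mem_nhdsWithin] with K hK
    exact (hg hK).2.trans ha

lemma StrictAntiOn.tendsto_atTop_of_rightInvOn (hf : StrictAntiOn f (Ioo 0 1))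
    (hg : MapsTo g (Ioi 0) (Ioo 0 1)) (hfg : RightInvOn g f (Ioi 0)) :
    Tendsto g atTop (𝓝 0) := by
  refine tendsto_order.2 ⟨fun a ha => ?_, fun a ha => ?_⟩
  · filter_upwards [eventually_gt_atTop 0] with K hK
    exact ha.trans (hg hK).1
  · obtain ⟨x, hx0, hxa⟩ := exists_between (lt_min ha one_pos)
    have hx : x ∈ Ioo (0 : ℝ) 1 := ⟨hx0, hxa.trans_le (min_le_right a 1)⟩
    filter_upwards [eventually_gt_atTop (max (f x) 0)] with K hK
    have hK0 : 0 < K := (le_max_right _ _).trans_lt hK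
    have : g K < x := by
      rw [← hf.lt_iff_gt hx (hg hK0), hfg hK0]
      exact (le_max_left _ _).trans_lt hK
    exact this.trans (hxa.trans_le (min_le_left a 1))

end RightInverse

/-- **Remark (properties of the radii `R₂`, `R₃`).** If, for every `K > 0`, `R₃ K` is the
smallest root in `(0,1)` of the quintic and `R₂ K` the smallest root in `(0,1)` of the
cubic, then `R₃` is strictly decreasing on `(0, ∞)`, `R₃(K) → 1` as `K → 0⁺`,
`R₃(K) → 0` as `K → ∞`, and `R₃(K) ≤ R₂(K)` for all `K > 0`. -/
theorem stmt9 (R₃ R₂ : ℝ → ℝ)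
    (hR₃ : ∀ K : ℝ, 0 < K → R₃ K ∈ Set.Ioo (0 : ℝ) 1 ∧ QuinticEq K (R₃ K) ∧
      ∀ x ∈ Set.Ioo (0 : ℝ) 1, QuinticEq K x → R₃ K ≤ x)
    (hR₂ : ∀ K : ℝ, 0 < K → R₂ K ∈ Set.Ioo (0 : ℝ) 1 ∧ CubicEq K (R₂ K) ∧
      ∀ x ∈ Set.Ioo (0 : ℝ) 1, CubicEq K x → R₂ K ≤ x) :
    StrictAntiOn R₃ (Set.Ioi 0) ∧
    Filter.Tendsto R₃ (nhdsWithin 0 (Set.Ioi 0)) (nhds 1) ∧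
    Filter.Tendsto R₃ Filter.atTop (nhds 0) ∧
    ∀ K : ℝ, 0 < K → R₃ K ≤ R₂ K := by
  have hmaps : MapsTo R₃ (Ioi 0) (Ioo 0 1) := fun K hK => (hR₃ K hK).1
  have hinv : RightInvOn R₃ quinticParam (Ioi 0) := fun K (hK : 0 < K) =>
    (quinticEq_iff hK.ne' (hR₃ K hK).1.1).1 (hR₃ K hK).2.1
  refine ⟨strictAntiOn_quinticParam.strictAntiOn_of_rightInvOn hmaps hinv,
    strictAntiOn_quinticParam.tendsto_nhdsGT_zero_of_rightInvOn quinticParam_pos hmaps hinv,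
    strictAntiOn_quinticParam.tendsto_atTop_of_rightInvOn hmaps hinv, fun K hK => ?_⟩
  obtain ⟨hR₂mem, hR₂eq, -⟩ := hR₂ K hK
  have hR₂param : cubicParam (R₂ K) = K := (cubicEq_iff hK.ne' hR₂mem.1).1 hR₂eq
  have : quinticParam (R₂ K) < quinticParam (R₃ K) :=
    calc quinticParam (R₂ K) < cubicParam (R₂ K) := quinticParam_lt_cubicParam hR₂mem
      _ = quinticParam (R₃ K) := by rw [hR₂param, hinv (show K ∈ Ioi 0 from hK)]
  exact ((strictAntiOn_quinticParam.lt_iff_gt hR₂mem (hmaps hK)).1 this).le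
end
end
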